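/- Progress for λ_op: if a configuration ⟨c; E⟩ is such that the plugged computation E[c] is closed and well-typed with computation type T ! Δ, then either (1) c is of the form return v and E is the empty evaluation context, (2) c is of the form op(v) for some operation op ∈ Δ with op not handled by any handler frame in E, or (3) there exist c', E' such that ⟨c; E⟩ → ⟨c'; E'⟩. -/
import Mathlib


/- A formalisation of λ_op: a fine-grained call-by-value calculus with deep
effect handlers and multi-shot continuations, in de Bruijn style. -/

namespace EffLang

abbrev OpName := String
abbrev Eff := Set OpName

/-- Value types of λ_op. -/
inductive VTy : Type
  | nat  : VTy
  | fn   : VTy → Eff → VTy → VTy    -- S →Δ T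
  | cont : VTy → Eff → VTy → VTy    -- S ⇒Δ T

/-- An effect signature Σ, assigning argument and result types to operations. -/
structure Sig where
  arg : OpName → VTy
  res : OpName → VTy

mutual
  /-- Values. -/
  inductive Val : Type
    | var  : ℕ → Val
    | nat  : ℕ → Val
    | lam  : Comp → Val
    | kont : Comp → Val
  /-- Computations. -/
  inductive Comp : Type
    | app    : Val → Val → Comp
    | ret    : Val → Comp
    | seq    : Comp → Comp → Comp            -- do x ← c₁ in c₂
    | op     : OpName → Val → Comp
    | handle : Comp → Handler → Comp
    | resume : Val → Val → Comp              -- continue v₁ v₂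
  /-- Handlers. -/
  inductive Handler : Type
    | retH : Comp → Handler
    | opH  : Handler → OpName → Comp → Handler
end

def liftR (f : ℕ → ℕ) : ℕ → ℕ
  | 0 => 0
  | n + 1 => f n + 1

mutual
  def Val.rename : Val → (ℕ → ℕ) → Val
    | .var n, f => .var (f n)
    | .nat m, _ => .nat m
    | .lam c, f => .lam (c.rename (liftR f))
    | .kont c, f => .kont (c.rename (liftR f))
  def Comp.rename : Comp → (ℕ → ℕ) → Comp
    | .app v₁ v₂, f => .app (v₁.rename f) (v₂.rename f)
    | .ret v, f => .ret (v.rename f)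
    | .seq c₁ c₂, f => .seq (c₁.rename f) (c₂.rename (liftR f))
    | .op o v, f => .op o (v.rename f)
    | .handle c h, f => .handle (c.rename f) (h.rename f)
    | .resume v₁ v₂, f => .resume (v₁.rename f) (v₂.rename f)
  def Handler.rename : Handler → (ℕ → ℕ) → Handler
    | .retH c, f => .retH (c.rename (liftR f))
    | .opH h o c, f => .opH (h.rename f) o (c.rename (liftR (liftR f)))
end

def liftS (σ : ℕ → Val) : ℕ → Val
  | 0 => .var 0
  | n + 1 => (σ n).rename Nat.succ

mutual
  def Val.subst : Val → (ℕ → Val) → Val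
    | .var n, σ => σ n
    | .nat m, _ => .nat m
    | .lam c, σ => .lam (c.subst (liftS σ))
    | .kont c, σ => .kont (c.subst (liftS σ))
  def Comp.subst : Comp → (ℕ → Val) → Comp
    | .app v₁ v₂, σ => .app (v₁.subst σ) (v₂.subst σ)
    | .ret v, σ => .ret (v.subst σ)
    | .seq c₁ c₂, σ => .seq (c₁.subst σ) (c₂.subst (liftS σ))
    | .op o v, σ => .op o (v.subst σ)
    | .handle c h, σ => .handle (c.subst σ) (h.subst σ)
    | .resume v₁ v₂, σ => .resume (v₁.subst σ) (v₂.subst σ)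
  def Handler.subst : Handler → (ℕ → Val) → Handler
    | .retH c, σ => .retH (c.subst (liftS σ))
    | .opH h o c, σ => .opH (h.subst σ) o (c.subst (liftS (liftS σ)))
end

/-- Substituting a single value for the topmost de Bruijn variable. -/
def Comp.subst1 (c : Comp) (v : Val) : Comp :=
  c.subst fun n => match n with | 0 => v | n + 1 => .var n

/-- Substituting for the two topmost de Bruijn variables
(index 0 is the continuation `k`, index 1 the argument `x`). -/
def Comp.subst2 (c : Comp) (vk vx : Val) : Comp :=
  c.subst fun n => match n with | 0 => vk | 1 => vx | n + 2 => .var n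

/-- The operations handled by a handler. -/
def Handler.dom : Handler → Eff
  | .retH _ => ∅
  | .opH h o _ => insert o h.dom

/-- The return clause of a handler. -/
def Handler.retClause : Handler → Comp
  | .retH c => c
  | .opH h _ _ => h.retClause

/-- The clause of a handler for an operation, if any. -/
def Handler.lookup : Handler → OpName → Option Comp
  | .retH _, _ => none
  | .opH h o c, o' => if o = o' then some c else h.lookup o'

abbrev TCtx := List VTy

mutual
  /-- Typing of values: `Γ ⊢ v : T`. -/
  inductive ValTy : Sig → TCtx → Val → VTy → Prop
    | var {Sg : Sig} {Γ : TCtx} {n : ℕ} {T : VTy} :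
        Γ[n]? = some T → ValTy Sg Γ (.var n) T
    | nat {Sg : Sig} {Γ : TCtx} {m : ℕ} : ValTy Sg Γ (.nat m) .nat
    | lam {Sg : Sig} {Γ : TCtx} {S T : VTy} {Δ : Eff} {c : Comp} :
        CompTy Sg (S :: Γ) c T Δ → ValTy Sg Γ (.lam c) (.fn S Δ T)
    | kont {Sg : Sig} {Γ : TCtx} {S T : VTy} {Δ : Eff} {c : Comp} :
        CompTy Sg (S :: Γ) c T Δ → ValTy Sg Γ (.kont c) (.cont S Δ T)
  /-- Typing of computations: `Γ ⊢ c : T ! Δ`. -/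
  inductive CompTy : Sig → TCtx → Comp → VTy → Eff → Prop
    | app {Sg : Sig} {Γ : TCtx} {S T : VTy} {Δ : Eff} {v₁ v₂ : Val} :
        ValTy Sg Γ v₁ (.fn S Δ T) → ValTy Sg Γ v₂ S → CompTy Sg Γ (.app v₁ v₂) T Δ
    | resume {Sg : Sig} {Γ : TCtx} {S T : VTy} {Δ : Eff} {v₁ v₂ : Val} :
        ValTy Sg Γ v₁ (.cont S Δ T) → ValTy Sg Γ v₂ S → CompTy Sg Γ (.resume v₁ v₂) T Δ
    | ret {Sg : Sig} {Γ : TCtx} {T : VTy} {Δ : Eff} {v : Val} :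
        ValTy Sg Γ v T → CompTy Sg Γ (.ret v) T Δ
    | seq {Sg : Sig} {Γ : TCtx} {S T : VTy} {Δ : Eff} {c₁ c₂ : Comp} :
        CompTy Sg Γ c₁ S Δ → CompTy Sg (S :: Γ) c₂ T Δ → CompTy Sg Γ (.seq c₁ c₂) T Δ
    | op {Sg : Sig} {Γ : TCtx} {Δ : Eff} {o : OpName} {v : Val} :
        ValTy Sg Γ v (Sg.arg o) → o ∈ Δ → CompTy Sg Γ (.op o v) (Sg.res o) Δ
    | handle {Sg : Sig} {Γ : TCtx} {S T : VTy} {Δ₁ Δ₂ : Eff} {c : Comp} {h : Handler} :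
        CompTy Sg Γ c S Δ₁ → HandTy Sg Γ h S Δ₁ T Δ₂ →
        (∀ o ∈ Δ₁, o ∉ Δ₂ → o ∈ h.dom) →
        CompTy Sg Γ (.handle c h) T Δ₂
  /-- Typing of handlers: `Γ ⊢ h : S ! Δ₁ ⇒ T ! Δ₂`. -/
  inductive HandTy : Sig → TCtx → Handler → VTy → Eff → VTy → Eff → Prop
    | retH {Sg : Sig} {Γ : TCtx} {S T : VTy} {Δ₁ Δ₂ : Eff} {c : Comp} :
        CompTy Sg (S :: Γ) c T Δ₂ → HandTy Sg Γ (.retH c) S Δ₁ T Δ₂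
    | opH {Sg : Sig} {Γ : TCtx} {S T : VTy} {Δ₁ Δ₂ : Eff} {o : OpName} {h : Handler} {c : Comp} :
        HandTy Sg Γ h S Δ₁ T Δ₂ →
        CompTy Sg (VTy.cont (Sg.res o) Δ₂ T :: Sg.arg o :: Γ) c T Δ₂ →
        Δ₁ ⊆ Δ₂ ∪ {o} →
        o ∉ h.dom →
        HandTy Sg Γ (.opH h o c) S Δ₁ T Δ₂
end

/-- Evaluation frames. -/
inductive Frame : Type
  | seqF    : Comp → Frame            -- do x ← [-] in c₂
  | handleF : Handler → Frame         -- handle [-] with h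

/-- Evaluation contexts, represented as a stack of frames (head innermost). -/
abbrev EvalCtx := List Frame

def plugF : Frame → Comp → Comp
  | .seqF c₂, c => .seq c c₂
  | .handleF h, c => .handle c h

/-- Plugging a computation into an evaluation context: `E[c]`. -/
def plug : EvalCtx → Comp → Comp
  | [], c => c
  | F :: E, c => plug E (plugF F c)

/-- The operations handled by (handler frames in) an evaluation context. -/
def handled : EvalCtx → Eff
  | [] => ∅
  | .seqF _ :: E => handled E
  | .handleF h :: E => handled E ∪ h.dom

/-- Configurations `⟨c; E⟩`. -/
abbrev Config := Comp × EvalCtx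

/-- The small-step operational semantics of λ_op on configurations. -/
inductive Step : Config → Config → Prop
  | app {c : Comp} {v : Val} {E : EvalCtx} :
      Step (.app (.lam c) v, E) (c.subst1 v, E)
  | seq {c : Comp} {v : Val} {E : EvalCtx} :
      Step (.seq (.ret v) c, E) (c.subst1 v, E)
  | hdl {h : Handler} {v : Val} {E : EvalCtx} :
      Step (.handle (.ret v) h, E) (h.retClause.subst1 v, E)
  | push (F : Frame) (c : Comp) (E : EvalCtx) :
      Step (plugF F c, E) (c, F :: E)
  | pop (F : Frame) (v : Val) (E : EvalCtx) :
      Step (.ret v, F :: E) (plugF F (.ret v), E)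
  | op {h : Handler} {o : OpName} {v : Val} {c : Comp} (E₁ E₂ : EvalCtx) :
      h.lookup o = some c →
      o ∉ handled E₂ →
      Step (.op o v, E₂ ++ .handleF h :: E₁)
           (c.subst2 (.kont (.handle (plug E₂ (.ret (.var 0))) h)) v, E₁)
  | resume {c : Comp} {v : Val} {E : EvalCtx} :
      Step (.resume (.kont c) v, E) (c.subst1 v, E)

/-- Iterated reduction. -/
abbrev Steps : Config → Config → Prop := Relation.ReflTransGen Step

/-- Divergence: an infinite reduction sequence from a configuration. -/
def Diverges (k : Config) : Prop :=
  ∃ f : ℕ → Config, f 0 = k ∧ ∀ n, Step (f n) (f (n + 1))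

end EffLang

namespace EffLang

lemma ctx_typing {Sg : Sig} {E : EvalCtx} {c : Comp} {T : VTy} {Δ : Eff}
    (h : CompTy Sg [] (plug E c) T Δ) :
    ∃ T' Δ', CompTy Sg [] c T' Δ' ∧ Δ' ⊆ Δ ∪ handled E := by
  induction E generalizing c T Δ with
  | nil => exact ⟨T, Δ, h, by simp [handled]⟩
  | cons F E ih =>
    obtain ⟨T', Δ', hc, hsub⟩ := ih h
    cases F with
    | seqF c₂ =>
      cases hc with
      | seq h1 h2 => exact ⟨_, _, h1, by simpa [handled] using hsub⟩
    | handleF hd =>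
      cases hc with
      | handle h1 h2 h3 =>
        refine ⟨_, _, h1, ?_⟩
        intro o ho
        by_cases hmem : o ∈ Δ'
        · have := hsub hmem
          simp only [handled, Set.mem_union] at this ⊢
          tauto
        · have := h3 o ho hmem
          simp only [handled, Set.mem_union]
          tauto

lemma lookup_of_dom : ∀ (h : Handler) (o : OpName), o ∈ h.dom →
    ∃ c, h.lookup o = some c
  | .retH c, o, hm => by simp [Handler.dom] at hm
  | .opH h o' c, o, hm => by
    by_cases he : o' = o
    · exact ⟨c, by simp [Handler.lookup, he]⟩
    · simp only [Handler.dom, Set.mem_insert_iff] at hm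
      obtain ⟨c', hc'⟩ := lookup_of_dom h o (by tauto)
      exact ⟨c', by simp [Handler.lookup, he, hc']⟩

lemma decompose {E : EvalCtx} {o : OpName} (hm : o ∈ handled E) :
    ∃ (E₂ : EvalCtx) (hd : Handler) (E₁ : EvalCtx) (c : Comp),
      E = E₂ ++ .handleF hd :: E₁ ∧ o ∉ handled E₂ ∧ hd.lookup o = some c := by
  induction E with
  | nil => simp [handled] at hm
  | cons F E ih =>
    cases F with
    | seqF c₂ =>
      obtain ⟨E₂, hd, E₁, c, he, h1, h2⟩ := ih hm
      exact ⟨.seqF c₂ :: E₂, hd, E₁, c, by simp [he], by simpa [handled] using h1, h2⟩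
    | handleF hd' =>
      simp only [handled, Set.mem_union] at hm
      by_cases hd : o ∈ hd'.dom
      · obtain ⟨c, hc⟩ := lookup_of_dom hd' o hd
        exact ⟨[], hd', E, c, rfl, by simp [handled], hc⟩
      · obtain ⟨E₂, hD, E₁, c, he, h1, h2⟩ := ih (by tauto)
        refine ⟨.handleF hd' :: E₂, hD, E₁, c, by simp [he], ?_, h2⟩
        simp only [handled, Set.mem_union]
        tauto

lemma canon_fn {Sg : Sig} {v : Val} {S T : VTy} {Δ : Eff}
    (h : ValTy Sg [] v (.fn S Δ T)) : ∃ c, v = .lam c := by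
  cases h with
  | var hn => simp at hn
  | lam _ => exact ⟨_, rfl⟩

lemma canon_cont {Sg : Sig} {v : Val} {S T : VTy} {Δ : Eff}
    (h : ValTy Sg [] v (.cont S Δ T)) : ∃ c, v = .kont c := by
  cases h with
  | var hn => simp at hn
  | kont _ => exact ⟨_, rfl⟩

/-- **Progress for λ_op** (Theorem B.1): if `E[c]` is closed and well-typed with
computation type `T ! Δ`, then either `c` is `return v` with `E` empty, or `c`
is an unhandled operation call `op(v)` with `op ∈ Δ`, or the configuration
`⟨c; E⟩` can take a step. -/
theorem progress (Sg : Sig) (c : Comp) (E : EvalCtx) (T : VTy) (Δ : Eff)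
    (hty : CompTy Sg [] (plug E c) T Δ) :
    (∃ v : Val, c = .ret v ∧ E = []) ∨
    (∃ (o : OpName) (v : Val), c = .op o v ∧ o ∈ Δ ∧ o ∉ handled E) ∨
    (∃ (c' : Comp) (E' : EvalCtx), Step (c, E) (c', E')) := by
  obtain ⟨T', Δ', hc, hsub⟩ := ctx_typing hty
  cases c with
  | app v₁ v₂ =>
    refine Or.inr (Or.inr ?_)
    cases hc with
    | app h1 h2 =>
      obtain ⟨c, rfl⟩ := canon_fn h1
      exact ⟨_, _, Step.app⟩
  | ret v =>
    cases E with
    | nil => exact Or.inl ⟨v, rfl, rfl⟩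
    | cons F E => exact Or.inr (Or.inr ⟨_, _, Step.pop F v E⟩)
  | seq c₁ c₂ =>
    exact Or.inr (Or.inr ⟨c₁, .seqF c₂ :: E, Step.push (.seqF c₂) c₁ E⟩)
  | op o v =>
    by_cases hm : o ∈ handled E
    · obtain ⟨E₂, hd, E₁, cl, rfl, h1, h2⟩ := decompose hm
      exact Or.inr (Or.inr ⟨_, _, Step.op E₁ E₂ h2 h1⟩)
    · refine Or.inr (Or.inl ⟨o, v, rfl, ?_, hm⟩)
      cases hc with
      | op hv ho =>
        have := hsub ho
        simp only [Set.mem_union] at this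
        tauto
  | handle c h =>
    exact Or.inr (Or.inr ⟨c, .handleF h :: E, Step.push (.handleF h) c E⟩)
  | resume v₁ v₂ =>
    refine Or.inr (Or.inr ?_)
    cases hc with
    | resume h1 h2 =>
      obtain ⟨c, rfl⟩ := canon_cont h1
      exact ⟨_, _, Step.resume⟩

end EffLang
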